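/- Let R be a semiprime ring satisfying the ascending chain condition on left annihilators (e.g., left Goldie), σ an automorphism of R, and I an ideal of R with σ(I) ⊆ I. Then σ(ann_R(I)) = ann_R(I). -/

import Mathlib

def IsSemiprimeRing (R : Type*) [Ring R] : Prop :=
  ∀ a : R, (∀ r : R, a * r * a = 0) → a = 0

def leftAnn {R : Type*} [Ring R] (A : Set R) : Set R := {r | ∀ a ∈ A, r * a = 0}

def rightAnn {R : Type*} [Ring R] (A : Set R) : Set R := {r | ∀ a ∈ A, a * r = 0}

def twoAnn {R : Type*} [Ring R] (A : Set R) : Set R := leftAnn A ∩ rightAnn A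

/-- The ascending chain condition on left annihilators. -/
def AccLeftAnnihilators (R : Type*) [Ring R] : Prop :=
  ∀ f : ℕ → Set R, (∀ n, ∃ A : Set R, f n = leftAnn A) → (∀ n, f n ⊆ f (n + 1)) →
    ∃ n, ∀ m, n ≤ m → f m = f n

/-! In a semiprime ring the left annihilator of an ideal is already two-sided, so it suffices to
treat `L = leftAnn I`. The left annihilators of `I ⊇ σ(I) ⊇ σ²(I) ⊇ ⋯` form an ascending chain,
and `σⁿ` carries `leftAnn I` onto `leftAnn (σⁿ I)`. When the chain becomes stationary,
`σⁿ(leftAnn (σ I)) = σⁿ(leftAnn I)`, and injectivity of `σⁿ` gives `σ(L) = leftAnn (σ I) = L`. -/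

section Annihilator

variable {R : Type*} [Ring R]

lemma leftAnn_antitone {A B : Set R} (h : A ⊆ B) : leftAnn B ⊆ leftAnn A :=
  fun _ hr a ha => hr a (h ha)

lemma leftAnn_image (σ : R ≃+* R) (A : Set R) : leftAnn (σ '' A) = σ '' leftAnn A := by
  refine Set.Subset.antisymm (fun r hr => ?_) ?_
  · refine ⟨σ.symm r, fun a ha => σ.injective ?_, σ.apply_symm_apply r⟩
    rw [map_mul, σ.apply_symm_apply, map_zero]
    exact hr (σ a) ⟨a, ha, rfl⟩
  · rintro _ ⟨s, hs, rfl⟩ _ ⟨a, ha, rfl⟩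
    rw [← map_mul, hs a ha, map_zero]

lemma leftAnn_image_iterate (σ : R ≃+* R) (A : Set R) (n : ℕ) :
    leftAnn ((⇑σ)^[n] '' A) = (⇑σ)^[n] '' leftAnn A := by
  induction n with
  | zero => simp only [Function.iterate_zero, Set.image_id]
  | succ n ih =>
    rw [Function.iterate_succ', Set.image_comp, Set.image_comp, leftAnn_image, ih]

lemma image_leftAnn_eq_of_image_subset (hacc : AccLeftAnnihilators R) (σ : R ≃+* R)
    {A : Set R} (hA : σ '' A ⊆ A) : σ '' leftAnn A = leftAnn A := by
  have hchain : ∀ n, leftAnn ((⇑σ)^[n] '' A) ⊆ leftAnn ((⇑σ)^[n + 1] '' A) := fun n => by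
    rw [Function.iterate_succ, Set.image_comp]
    exact leftAnn_antitone (Set.image_mono hA)
  obtain ⟨n, hn⟩ := hacc (fun n => leftAnn ((⇑σ)^[n] '' A)) (fun n => ⟨_, rfl⟩) hchain
  have hstable : (⇑σ)^[n] '' leftAnn (σ '' A) = (⇑σ)^[n] '' leftAnn A := by
    rw [← leftAnn_image_iterate, ← leftAnn_image_iterate, ← Set.image_comp,
      ← Function.iterate_succ]
    exact hn (n + 1) n.le_succ
  rw [← leftAnn_image]
  exact Set.image_injective.mpr (σ.injective.iterate n) hstable

end Annihilator

namespace IsSemiprimeRing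

variable {R : Type*} [Ring R]

lemma leftAnn_subset_rightAnn (hsp : IsSemiprimeRing R) {A : Set R}
    (hA : ∀ s a, a ∈ A → s * a ∈ A) : leftAnn A ⊆ rightAnn A := by
  intro r hr a ha
  apply hsp (a * r)
  intro s
  calc a * r * s * (a * r) = a * (r * (s * a)) * r := by simp only [mul_assoc]
    _ = 0 := by rw [hr _ (hA s a ha), mul_zero, zero_mul]

lemma twoAnn_eq_leftAnn (hsp : IsSemiprimeRing R) (I : TwoSidedIdeal R) :
    twoAnn (I : Set R) = leftAnn (I : Set R) :=
  Set.inter_eq_left.mpr (hsp.leftAnn_subset_rightAnn fun s a ha => I.mul_mem_left s a ha)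

end IsSemiprimeRing

/-- if `R` is semiprime with ACC on left annihilators, `σ` an automorphism,
and `I` an ideal with `σ(I) ⊆ I`, then `σ(ann_R(I)) = ann_R(I)`. -/
theorem stmt2 {R : Type*} [Ring R] (hsp : IsSemiprimeRing R)
    (hacc : AccLeftAnnihilators R) (σ : R ≃+* R) (I : TwoSidedIdeal R)
    (hσI : ∀ a ∈ I, σ a ∈ I) :
    σ '' twoAnn (I : Set R) = twoAnn (I : Set R) := by
  rw [hsp.twoAnn_eq_leftAnn I]
  exact image_leftAnn_eq_of_image_subset hacc σ (Set.image_subset_iff.mpr hσI)
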